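/- arXiv:2112.06781 — 3 statements merged into one kernel-verified Lean document; each statement's English description precedes it below -/
import Mathlib

section
/- Let X and Y be metric spaces with Gromov–Hausdorff distance s = d_GH(X,Y). If X is δ-hyperbolic, then Y is (δ+4s)-hyperbolic. Consequently |hyp(X) − hyp(Y)| ≤ 4·d_GH(X,Y). -/
/-- Gromov's four-point condition: `X` is `δ`-hyperbolic. -/
def IsDeltaHyperbolic (X : Type*) [MetricSpace X] (δ : ℝ) : Prop :=
  ∀ w x y z : X,
    dist w x + dist y z ≤ max (dist w y + dist x z) (dist w z + dist x y) + 2 * δ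

/-- The hyperbolicity of `X`: the infimum over all `δ ≥ 0` such that `X` is
`δ`-hyperbolic. -/
noncomputable def hyperbolicity (X : Type*) [MetricSpace X] : EReal :=
  sInf {n : EReal | ∃ δ : ℝ, 0 ≤ δ ∧ IsDeltaHyperbolic X δ ∧ n = (δ : EReal)}

def IsCorrespondence (X Y : Type*) (C : Set (X × Y)) : Prop :=
  (∀ x : X, ∃ y : Y, (x, y) ∈ C) ∧ (∀ y : Y, ∃ x : X, (x, y) ∈ C)

def DistortionLE {X Y : Type*} [MetricSpace X] [MetricSpace Y]
    (C : Set (X × Y)) (t : ℝ) : Prop :=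
  ∀ p ∈ C, ∀ q ∈ C, |dist p.1 q.1 - dist p.2 q.2| ≤ t

/-- The set whose infimum is the Gromov–Hausdorff distance between `X` and `Y`. -/
def ghSet (X Y : Type*) [MetricSpace X] [MetricSpace Y] : Set ℝ :=
  {s | ∃ C : Set (X × Y), IsCorrespondence X Y C ∧ DistortionLE C (2 * s)}

/-!
A correspondence of distortion at most `2t` changes each of the three pair sums in the four-point
condition by at most `4t`, so `δ`-hyperbolicity of one side transfers to `(δ + 4t)`-hyperbolicity
of the other; taking the infimum over `t` gives `δ + 4 d_GH`. Correspondences can be reversed, so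
the same holds in the other direction, and the bound on `hyp` follows by taking infima over `δ`.
-/

theorem IsCorrespondence.swap {X Y : Type*} {C : Set (X × Y)} (h : IsCorrespondence X Y C) :
    IsCorrespondence Y X (Prod.swap ⁻¹' C) :=
  ⟨h.2, h.1⟩

section Correspondence

variable {X Y : Type*} [MetricSpace X] [MetricSpace Y] {C : Set (X × Y)} {t : ℝ}

theorem DistortionLE.dist_snd_le (h : DistortionLE C t) {p q : X × Y} (hp : p ∈ C)
    (hq : q ∈ C) : dist p.2 q.2 ≤ dist p.1 q.1 + t := by
  linarith [(abs_le.1 (h p hp q hq)).1]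

theorem DistortionLE.dist_fst_le (h : DistortionLE C t) {p q : X × Y} (hp : p ∈ C)
    (hq : q ∈ C) : dist p.1 q.1 ≤ dist p.2 q.2 + t := by
  linarith [(abs_le.1 (h p hp q hq)).2]

theorem DistortionLE.swap (h : DistortionLE C t) : DistortionLE (Prod.swap ⁻¹' C) t :=
  fun p hp q hq => abs_sub_comm (dist p.1 q.1) _ ▸ h _ hp _ hq

theorem ghSet_subset_swap : ghSet X Y ⊆ ghSet Y X :=
  fun _ ⟨C, hC, hdis⟩ => ⟨Prod.swap ⁻¹' C, hC.swap, hdis.swap⟩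

theorem ghSet_comm : ghSet X Y = ghSet Y X :=
  ghSet_subset_swap.antisymm ghSet_subset_swap

/-- A negative element of `ghSet X Y` forces an empty correspondence, and then
`ghSet X Y = univ`, whose `sInf` is the junk value `0`. -/
theorem sInf_ghSet_nonneg : 0 ≤ sInf (ghSet X Y) := by
  by_cases hpos : ∀ s ∈ ghSet X Y, 0 ≤ s
  · exact Real.sInf_nonneg hpos
  push Not at hpos
  obtain ⟨s, ⟨C, hC, hdis⟩, hs⟩ := hpos
  have hCempty : C = ∅ := Set.eq_empty_of_forall_notMem fun p hp => by
    have := hdis p hp p hp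
    simp only [dist_self, sub_self, abs_zero] at this
    linarith
  have huniv : ghSet X Y = Set.univ :=
    Set.eq_univ_of_forall fun _ => ⟨C, hC, by simp [DistortionLE, hCempty]⟩
  rw [huniv, Real.sInf_univ]

end Correspondence

section Hyperbolicity

variable {X Y : Type*} [MetricSpace X] [MetricSpace Y]

theorem IsDeltaHyperbolic.of_distortionLE {C : Set (X × Y)} {δ t : ℝ}
    (hC : ∀ y : Y, ∃ x, (x, y) ∈ C) (hdis : DistortionLE C (2 * t))
    (hX : IsDeltaHyperbolic X δ) : IsDeltaHyperbolic Y (δ + 4 * t) := by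
  intro w x y z
  obtain ⟨w', hw⟩ := hC w
  obtain ⟨x', hx⟩ := hC x
  obtain ⟨y', hy⟩ := hC y
  obtain ⟨z', hz⟩ := hC z
  calc dist w x + dist y z ≤ dist w' x' + dist y' z' + 4 * t := by
        linarith [hdis.dist_snd_le hw hx, hdis.dist_snd_le hy hz]
    _ ≤ max (dist w' y' + dist x' z') (dist w' z' + dist x' y') + 2 * δ + 4 * t := by
        linarith [hX w' x' y' z']
    _ ≤ max (dist w y + dist x z + 4 * t) (dist w z + dist x y + 4 * t) + 2 * δ + 4 * t := by
        gcongr max ?_ ?_ + _ + _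
        · linarith [hdis.dist_fst_le hw hy, hdis.dist_fst_le hx hz]
        · linarith [hdis.dist_fst_le hw hz, hdis.dist_fst_le hx hy]
    _ = max (dist w y + dist x z) (dist w z + dist x y) + 2 * (δ + 4 * t) := by
        rw [max_add_add_right]
        ring

theorem IsDeltaHyperbolic.of_ghSet {δ : ℝ} (hne : (ghSet X Y).Nonempty)
    (hX : IsDeltaHyperbolic X δ) : IsDeltaHyperbolic Y (δ + 4 * sInf (ghSet X Y)) := by
  intro w x y z
  have hbound : ∀ t ∈ ghSet X Y,
      (dist w x + dist y z - max (dist w y + dist x z) (dist w z + dist x y) - 2 * δ) / 8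
        ≤ t := by
    rintro t ⟨C, hC, hdis⟩
    linarith [hX.of_distortionLE hC.2 hdis w x y z]
  linarith [le_csInf hne hbound]

theorem hyperbolicity_le_of_isDeltaHyperbolic {δ : ℝ} (hδ : 0 ≤ δ)
    (h : IsDeltaHyperbolic X δ) : hyperbolicity X ≤ δ :=
  sInf_le ⟨δ, hδ, h, rfl⟩

theorem hyperbolicity_le_add {c : ℝ} (hc : 0 ≤ c)
    (htr : ∀ δ : ℝ, 0 ≤ δ → IsDeltaHyperbolic X δ → IsDeltaHyperbolic Y (δ + c)) :
    hyperbolicity Y ≤ hyperbolicity X + c := by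
  rw [← EReal.sub_le_iff_le_add (Or.inl (EReal.coe_ne_bot _)) (Or.inl (EReal.coe_ne_top _))]
  refine le_sInf ?_
  rintro _ ⟨δ, hδ, hX, rfl⟩
  rw [EReal.sub_le_iff_le_add (Or.inl (EReal.coe_ne_bot _)) (Or.inl (EReal.coe_ne_top _)),
    ← EReal.coe_add]
  exact hyperbolicity_le_of_isDeltaHyperbolic (by linarith) (htr δ hδ hX)

end Hyperbolicity

theorem stmt4_general (X Y : Type*) [MetricSpace X] [MetricSpace Y] (δ s : ℝ)
    (hne : (ghSet X Y).Nonempty) (hs : s = sInf (ghSet X Y))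
    (hX : IsDeltaHyperbolic X δ) :
    IsDeltaHyperbolic Y (δ + 4 * s) ∧
      hyperbolicity Y ≤ hyperbolicity X + ((4 * s : ℝ) : EReal) ∧
      hyperbolicity X ≤ hyperbolicity Y + ((4 * s : ℝ) : EReal) := by
  subst hs
  have hs0 : 0 ≤ 4 * sInf (ghSet X Y) := by linarith [sInf_ghSet_nonneg (X := X) (Y := Y)]
  refine ⟨hX.of_ghSet hne, hyperbolicity_le_add hs0 fun _ _ h => h.of_ghSet hne,
    hyperbolicity_le_add hs0 fun _ _ h => ?_⟩
  rw [ghSet_comm] at hne ⊢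
  exact h.of_ghSet hne

/-- If `s = d_GH(X,Y)` and `X` is `δ`-hyperbolic, then `Y` is `(δ + 4s)`-hyperbolic.
Consequently `|hyp(X) − hyp(Y)| ≤ 4 · d_GH(X,Y)`. -/
theorem stmt4 (X Y : Type*) [MetricSpace X] [MetricSpace Y] (δ s : ℝ) (hδ : 0 ≤ δ)
    (hne : (ghSet X Y).Nonempty) (hs : s = sInf (ghSet X Y))
    (hX : IsDeltaHyperbolic X δ) :
    IsDeltaHyperbolic Y (δ + 4 * s) ∧
      hyperbolicity Y ≤ hyperbolicity X + ((4 * s : ℝ) : EReal) ∧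
      hyperbolicity X ≤ hyperbolicity Y + ((4 * s : ℝ) : EReal) :=
  stmt4_general X Y δ s hne hs hX
end

section
/- Let X be a finite δ-hyperbolic ν-geodesic metric space. Then for every t ≥ 4δ+2ν, the Vietoris–Rips complex VR_t(X) is contractible (indeed, collapsible to a point). -/
def IsGeodesicWithDefect (X : Type*) [MetricSpace X] (ν : ℝ) : Prop :=
  ∀ x y : X, ∀ r s : ℝ, 0 ≤ r → 0 ≤ s → r + s = dist x y →
    ∃ z : X, dist x z ≤ r + ν ∧ dist y z ≤ s + ν

/-- The Vietoris–Rips complex at threshold `t`: nonempty finite subsets of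
diameter at most `t`. -/
def VRComplex (X : Type*) [MetricSpace X] (t : ℝ) : Set (Finset X) :=
  {σ | σ.Nonempty ∧ ∀ x ∈ σ, ∀ y ∈ σ, dist x y ≤ t}

/-- An elementary collapse removes a free pair `(σ, τ)`: `σ` is a facet of `τ` and
`τ` is the unique proper coface of `σ`. -/
def ElemCollapse {X : Type*} (K L : Set (Finset X)) : Prop :=
  ∃ σ τ : Finset X, σ ∈ K ∧ τ ∈ K ∧ σ ⊂ τ ∧ σ.card + 1 = τ.card ∧
    (∀ ρ ∈ K, σ ⊂ ρ → ρ = τ) ∧ L = K \ {σ, τ}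

/-- A collapse is a finite sequence of elementary collapses. -/
def Collapses {X : Type*} (K L : Set (Finset X)) : Prop :=
  Relation.ReflTransGen ElemCollapse K L

/-! The complex collapses onto the base point `p` one vertex at a time, removing the points in
order of decreasing distance from `p`. The open star of a vertex `x` dominated by a vertex `z`
(every simplex through `x` stays a simplex after adding `z`) collapses away, by repeatedly removing
the free pair `(σ, σ ∪ {z})` with `σ` a largest simplex through `x` avoiding `z`. In the Rips complex
of a ball around `p`, a farthest point `x` is dominated by a point `z` at distance about `2δ + ν`
from `x` along an approximate geodesic towards `p`: the four-point condition for `y, z, x, p` bounds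
`d(z, y)` by `t + ε`, and since `X` is finite, `ε` can be chosen so small that this means `d(z, y) ≤ t`.
-/

open Finset Topology

section Collapse

variable {X : Type*} [DecidableEq X] {K : Set (Finset X)} {x z : X} {σ : Finset X}

/-- For a simplicial complex `K`, this says that `x` is dominated by `z`; the clause on
`σ.erase z` is the part of closure under faces that survives elementary collapses. -/
def IsDominatedBy (K : Set (Finset X)) (x z : X) : Prop :=
  ∀ σ ∈ K, x ∈ σ → insert z σ ∈ K ∧ σ.erase z ∈ K

lemma IsDominatedBy.exists_free_pair (hK : K.Finite) (hdom : IsDominatedBy K x z) (hxz : x ≠ z)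
    {σ₀ : Finset X} (hσ₀ : σ₀ ∈ K) (hxσ₀ : x ∈ σ₀) :
    ∃ σ ∈ K, x ∈ σ ∧ z ∉ σ ∧ ∀ ρ ∈ K, σ ⊂ ρ → ρ = insert z σ := by
  obtain ⟨σ, ⟨hσK, hxσ, hzσ⟩, hmax⟩ := Set.Finite.exists_maximalFor Finset.card
    {σ | σ ∈ K ∧ x ∈ σ ∧ z ∉ σ} (hK.subset fun _ h => h.1)
    ⟨σ₀.erase z, (hdom σ₀ hσ₀ hxσ₀).2, mem_erase.2 ⟨hxz, hxσ₀⟩, notMem_erase z σ₀⟩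
  refine ⟨σ, hσK, hxσ, hzσ, fun ρ hρ hσρ => ?_⟩
  have hxρ : x ∈ ρ := hσρ.subset hxσ
  have hsub : σ ⊆ ρ.erase z := subset_erase.2 ⟨hσρ.subset, hzσ⟩
  have heq : σ = ρ.erase z := eq_of_subset_of_card_le hsub
    (hmax ⟨(hdom ρ hρ hxρ).2, mem_erase.2 ⟨hxz, hxρ⟩, notMem_erase z ρ⟩ (card_le_card hsub))
  have hzρ : z ∈ ρ := by
    by_contra hzρ
    rw [erase_eq_of_notMem hzρ] at heq
    exact hσρ.ne heq
  rw [heq, insert_erase hzρ]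

lemma eq_or_eq_insert_of_insert_eq_insert {ρ : Finset X} (hzσ : z ∉ σ)
    (h : insert z ρ = insert z σ) : ρ = σ ∨ ρ = insert z σ := by
  by_cases hzρ : z ∈ ρ
  · right
    rwa [insert_eq_of_mem hzρ] at h
  · left
    simpa [hzσ, hzρ] using congrArg (·.erase z) h

lemma eq_or_eq_insert_of_erase_eq {ρ : Finset X} (h : ρ.erase z = σ) :
    ρ = σ ∨ ρ = insert z σ := by
  by_cases hzρ : z ∈ ρ
  · right
    rw [← h, insert_erase hzρ]
  · left
    rwa [erase_eq_of_notMem hzρ] at h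

lemma IsDominatedBy.sdiff_free_pair (hdom : IsDominatedBy K x z) (hzσ : z ∉ σ) :
    IsDominatedBy (K \ {σ, insert z σ}) x z := by
  intro ρ hρ hxρ
  simp only [Set.mem_sdiff, Set.mem_insert_iff, Set.mem_singleton_iff, not_or] at hρ ⊢
  obtain ⟨hρK, hρσ, hρτ⟩ := hρ
  obtain ⟨hins, hers⟩ := hdom ρ hρK hxρ
  have hne : ¬(ρ = σ ∨ ρ = insert z σ) := not_or.2 ⟨hρσ, hρτ⟩
  refine ⟨⟨hins, fun h => hzσ (h ▸ mem_insert_self z ρ),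
    fun h => hne (eq_or_eq_insert_of_insert_eq_insert hzσ h)⟩,
    ⟨hers, fun h => hne (eq_or_eq_insert_of_erase_eq h),
    fun h => notMem_erase z ρ (h ▸ mem_insert_self z σ)⟩⟩

theorem IsDominatedBy.collapses (hK : K.Finite) (hdom : IsDominatedBy K x z) (hxz : x ≠ z) :
    Collapses K {σ ∈ K | x ∉ σ} := by
  induction hn : K.ncard using Nat.strong_induction_on generalizing K with
  | _ n ih =>
  by_cases hstar : ∃ σ ∈ K, x ∈ σ
  · obtain ⟨σ₀, hσ₀, hxσ₀⟩ := hstar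
    obtain ⟨σ, hσK, hxσ, hzσ, hfree⟩ := hdom.exists_free_pair hK hxz hσ₀ hxσ₀
    have hstep : ElemCollapse K (K \ {σ, insert z σ}) :=
      ⟨σ, insert z σ, hσK, (hdom σ hσK hxσ).1, ssubset_insert hzσ,
        (card_insert_of_notMem hzσ).symm, hfree, rfl⟩
    have hlt : (K \ {σ, insert z σ}).ncard < n :=
      hn ▸ Set.ncard_lt_ncard (Set.sdiff_ssubset_left_iff.2 ⟨σ, hσK, by simp⟩) hK
    have hrest : {ρ ∈ K \ {σ, insert z σ} | x ∉ ρ} = {ρ ∈ K | x ∉ ρ} := by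
      ext ρ
      constructor
      · exact fun ⟨hρ, hxρ⟩ => ⟨hρ.1, hxρ⟩
      · rintro ⟨hρ, hxρ⟩
        refine ⟨⟨hρ, ?_⟩, hxρ⟩
        rintro (rfl | rfl)
        exacts [hxρ hxσ, hxρ (mem_insert_of_mem hxσ)]
    exact .head hstep (hrest ▸ ih _ hlt hK.sdiff (hdom.sdiff_free_pair hzσ) rfl)
  · push Not at hstar
    rw [Set.sep_eq_self_iff_mem_true.2 hstar]
    exact .refl

end Collapse

section Geometry

variable {X : Type*} [MetricSpace X] {δ ν t : ℝ}

lemma IsDeltaHyperbolic.nonneg (h : IsDeltaHyperbolic X δ) (x : X) : 0 ≤ δ := by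
  simpa using h x x x x

lemma IsGeodesicWithDefect.nonneg (h : IsGeodesicWithDefect X ν) (x : X) : 0 ≤ ν := by
  obtain ⟨z, hz, -⟩ := h x x 0 0 le_rfl le_rfl (by simp)
  simpa using dist_nonneg.trans hz

lemma exists_pos_forall_dist_le_add_imp [Finite X] (t : ℝ) :
    ∃ ε > 0, ∀ a b : X, dist a b ≤ t + ε → dist a b ≤ t := by
  have : ∀ᶠ ε in 𝓝[>] (0 : ℝ), ∀ q : X × X, dist q.1 q.2 ≤ t + ε → dist q.1 q.2 ≤ t := by
    refine Filter.eventually_all.2 fun q => ?_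
    by_cases hq : dist q.1 q.2 ≤ t
    · exact .of_forall fun _ _ => hq
    · filter_upwards [Ioo_mem_nhdsGT (sub_pos.2 (not_le.1 hq))] with ε hε h
      linarith [hε.2]
  obtain ⟨ε, hε, hεpos⟩ := (this.and self_mem_nhdsWithin).exists
  exact ⟨ε, hεpos, fun a b => hε (a, b)⟩

lemma exists_dominating_of_farthest [Finite X] (hhyp : IsDeltaHyperbolic X δ)
    (hgeo : IsGeodesicWithDefect X ν) (ht : 4 * δ + 2 * ν ≤ t) {p x : X} {S : Finset X}
    (hS : ∀ s ∈ S, ∀ y, dist p y < dist p s → y ∈ S) (hp : p ∈ S) (hx : x ∈ S)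
    (hfar : ∀ s ∈ S, dist p s ≤ dist p x) (hxp : x ≠ p) :
    ∃ z ∈ S, z ≠ x ∧ ∀ y ∈ S, dist x y ≤ t → dist z y ≤ t := by
  by_cases hnear : dist p x ≤ t
  · exact ⟨p, hp, hxp.symm, fun y hy _ => (hfar y hy).trans hnear⟩
  obtain ⟨ε, hε, hround⟩ := exists_pos_forall_dist_le_add_imp (X := X) t
  have hM : t + ε < dist p x := not_le.1 fun h => hnear (hround p x h)
  have hδ := hhyp.nonneg x
  have hν := hgeo.nonneg x
  obtain ⟨z, hxz, hpz⟩ := hgeo x p (2 * δ + ν + ε) (dist p x - (2 * δ + ν + ε))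
    (by positivity) (by linarith) (by rw [dist_comm]; ring)
  refine ⟨z, hS x hx z (by linarith), fun h => by subst h; linarith, fun y hy hxy => ?_⟩
  refine hround z y ?_
  have h4 := hhyp y z x p
  have hyp := hfar y hy
  rcases max_cases (dist y x + dist z p) (dist y p + dist z x) with ⟨h, -⟩ | ⟨h, -⟩ <;>
    rw [h] at h4 <;>
    linarith [dist_comm x p, dist_comm y x, dist_comm z p, dist_comm y z, dist_comm z x,
      dist_comm y p]

end Geometry

section Rips

def VRComplexOn (X : Type*) [MetricSpace X] (t : ℝ) (S : Finset X) : Set (Finset X) :=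
  {σ ∈ VRComplex X t | σ ⊆ S}

variable {X : Type*} [MetricSpace X] {t : ℝ}

lemma VRComplexOn_univ [Fintype X] : VRComplexOn X t univ = VRComplex X t := by
  simp [VRComplexOn]

lemma VRComplexOn_singleton (ht : 0 ≤ t) (p : X) : VRComplexOn X t {p} = {{p}} := by
  ext σ
  simp only [VRComplexOn, VRComplex, Set.mem_ofPred_eq, Set.mem_singleton_iff, subset_singleton_iff]
  constructor
  · rintro ⟨⟨hne, -⟩, h | h⟩
    · exact absurd h hne.ne_empty
    · exact h
  · rintro rfl
    simp [ht]

variable [DecidableEq X]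

lemma sep_notMem_VRComplexOn (S : Finset X) (x : X) :
    {σ ∈ VRComplexOn X t S | x ∉ σ} = VRComplexOn X t (S.erase x) := by
  ext σ
  simp only [VRComplexOn, Set.mem_ofPred_eq, subset_erase, and_assoc]

lemma isDominatedBy_VRComplexOn {S : Finset X} {x z : X} (hxz : x ≠ z) (hz : z ∈ S)
    (hdom : ∀ y ∈ S, dist x y ≤ t → dist z y ≤ t) : IsDominatedBy (VRComplexOn X t S) x z := by
  rintro σ ⟨⟨-, hdiam⟩, hσS⟩ hxσ
  have hzy : ∀ y ∈ σ, dist z y ≤ t := fun y hy => hdom y (hσS hy) (hdiam x hxσ y hy)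
  refine ⟨⟨⟨insert_nonempty z σ, ?_⟩, insert_subset hz hσS⟩,
    ⟨⟨x, mem_erase.2 ⟨hxz, hxσ⟩⟩,
      fun a ha b hb => hdiam a (mem_of_mem_erase ha) b (mem_of_mem_erase hb)⟩,
    (erase_subset z σ).trans hσS⟩
  intro a ha b hb
  rw [mem_insert] at ha hb
  rcases ha with rfl | ha <;> rcases hb with rfl | hb
  · rw [dist_self]
    exact dist_nonneg.trans (hdiam x hxσ x hxσ)
  · exact hzy b hb
  · rw [dist_comm]
    exact hzy a ha
  · exact hdiam a ha b hb

theorem collapses_VRComplexOn [Finite X] {δ ν : ℝ} (hhyp : IsDeltaHyperbolic X δ)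
    (hgeo : IsGeodesicWithDefect X ν) (ht : 4 * δ + 2 * ν ≤ t) {p : X} (S : Finset X)
    (hp : p ∈ S) (hS : ∀ s ∈ S, ∀ y, dist p y < dist p s → y ∈ S) :
    Collapses (VRComplexOn X t S) {{p}} := by
  induction S using Finset.strongInduction with
  | H S ih =>
  obtain ⟨x, hx, hfar⟩ := S.exists_max_image (dist p) ⟨p, hp⟩
  by_cases hxp : x = p
  · subst hxp
    have hS : S = {x} := eq_singleton_iff_unique_mem.2
      ⟨hx, fun s hs => (dist_le_zero.1 ((hfar s hs).trans_eq (dist_self x))).symm⟩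
    rw [hS, VRComplexOn_singleton (by linarith [hhyp.nonneg x, hgeo.nonneg x])]
    exact .refl
  obtain ⟨z, hz, hzx, hdom⟩ := exists_dominating_of_farthest hhyp hgeo ht hS hp hx hfar hxp
  have hcoll := (isDominatedBy_VRComplexOn (Ne.symm hzx) hz hdom).collapses
    (Set.toFinite _) (Ne.symm hzx)
  rw [sep_notMem_VRComplexOn] at hcoll
  refine hcoll.trans (ih _ (erase_ssubset hx) (mem_erase.2 ⟨Ne.symm hxp, hp⟩) fun s hs y hy => ?_)
  have hs' := mem_of_mem_erase hs
  exact mem_erase.2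
    ⟨fun h => (hy.trans_le (hfar s hs')).ne (congrArg (dist p) h), hS s hs' y hy⟩

end Rips

theorem stmt8_general (X : Type*) [MetricSpace X] [Fintype X] [Nonempty X]
    (δ ν t : ℝ)
    (hhyp : IsDeltaHyperbolic X δ) (hgeo : IsGeodesicWithDefect X ν)
    (ht : 4 * δ + 2 * ν ≤ t) :
    ∃ p : X, Collapses (VRComplex X t) {{p}} := by
  classical
  obtain ⟨p⟩ := ‹Nonempty X›
  refine ⟨p, ?_⟩
  rw [← VRComplexOn_univ]
  exact collapses_VRComplexOn hhyp hgeo ht univ (mem_univ p) fun _ _ y _ => mem_univ y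

/-- Generalized contractibility lemma: for a finite `δ`-hyperbolic `ν`-geodesic
metric space and `t ≥ 4δ + 2ν`, the Vietoris–Rips complex `VR_t(X)` is
collapsible to a point (in particular contractible). -/
theorem stmt8 (X : Type*) [MetricSpace X] [Fintype X] [Nonempty X]
    (δ ν t : ℝ) (hδ : 0 ≤ δ) (hν : 0 ≤ ν)
    (hhyp : IsDeltaHyperbolic X δ) (hgeo : IsGeodesicWithDefect X ν)
    (ht : 4 * δ + 2 * ν ≤ t) :
    ∃ p : X, Collapses (VRComplex X t) {{p}} :=
  stmt8_general X δ ν t hhyp hgeo ht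
end

section
/- Let (V,d) be a finite tree metric space and let x,y ∈ V be distinct with d(x,y) = r. Then the set B(x,r) ∩ B(y,r) of points within distance r of both x and y has diameter exactly r; moreover any two points a,b ∈ B(x,r) ∩ B(y,r) with d(a,b) = r satisfy a,b ∈ S(x,r) ∪ S(y,r), i.e., each of a,b is at distance exactly r from x or from y. -/
/-!
Let `p` be the path from `x` to `y`. Every vertex `a` has a gate `m` on `p`, a vertex of `p`
nearest to `a`, and the path from `a` to `m` meets `p` only at `m`; hence
`d(a,x) = d(a,m) + d(m,x)` and `d(a,y) = d(a,m) + d(m,y)`. Comparing the gates of `a` and `b`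
along `p` yields the four-point inequality
`d(a,b) + d(x,y) ≤ max (d(a,x) + d(b,y)) (d(a,y) + d(b,x))`.
For `a, b` in both balls the right side is at most `2r`, so `d(a,b) ≤ r`, with equality only if
one of the two sums equals `2r`, which pins each of `a, b` to a sphere.
-/

open SimpleGraph.Walk

namespace SimpleGraph.Walk

variable {V : Type*} {G : SimpleGraph V}

theorem IsPath.append_of_forall_mem_support {u v w : V} {p : G.Walk u v} {q : G.Walk v w}
    (hp : p.IsPath) (hq : q.IsPath) (h : ∀ z ∈ p.support, z ∈ q.support → z = v) :
    (p.append q).IsPath := by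
  have hq' := hq.support_nodup
  rw [← q.cons_tail_support, List.nodup_cons] at hq'
  rw [isPath_def, support_append]
  refine hp.support_nodup.append hq'.2 fun z hzp hzq => hq'.1 ?_
  exact h z hzp (q.cons_tail_support ▸ List.mem_cons_of_mem _ hzq) ▸ hzq

end SimpleGraph.Walk

def IsPathLengthMetric {V : Type*} [Dist V] (G : SimpleGraph V) (l : Sym2 V → ℝ) : Prop :=
  ∀ (x y : V) (p : G.Walk x y), p.IsPath → dist x y = (p.edges.map l).sum

namespace IsPathLengthMetric

variable {V : Type*} {G : SimpleGraph V} {l : Sym2 V → ℝ}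

theorem dist_add_dist_of_mem_support [Dist V] (hd : IsPathLengthMetric G l) {u v c : V}
    {p : G.Walk u v} (hp : p.IsPath) (hc : c ∈ p.support) :
    dist u c + dist c v = dist u v := by
  classical
  have hu := hd u c _ (hp.takeUntil hc)
  have hv := hd c v _ (hp.dropUntil hc)
  have huv := hd u v p hp
  rw [← p.take_spec hc, edges_append, List.map_append, List.sum_append] at huv
  linarith

theorem dist_add_dist_eq_or_dist_add_dist_eq [Dist V] (hd : IsPathLengthMetric G l) {x y m n : V}
    {p : G.Walk x y} (hp : p.IsPath) (hm : m ∈ p.support) (hn : n ∈ p.support) :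
    dist x n + dist n m = dist x m ∨ dist m n + dist n y = dist m y := by
  classical
  rw [← p.take_spec hm, support_append, List.mem_append] at hn
  exact hn.imp (hd.dist_add_dist_of_mem_support (hp.takeUntil hm))
    (fun h => hd.dist_add_dist_of_mem_support (hp.dropUntil hm) (List.mem_of_mem_tail h))

theorem exists_gate [MetricSpace V] (hd : IsPathLengthMetric G l) (hG : G.Connected)
    {x y : V} {p : G.Walk x y} (hp : p.IsPath) (a : V) :
    ∃ m ∈ p.support, dist a x = dist a m + dist m x ∧ dist a y = dist a m + dist m y := by
  classical
  obtain ⟨m, hm, hmin⟩ := Set.exists_min_image {z | z ∈ p.support} (dist a)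
    p.support.finite_toSet ⟨x, p.start_mem_support⟩
  obtain ⟨w⟩ := hG.preconnected a m
  have hw := w.bypass_isPath
  -- a vertex of `p` on a geodesic from `a` to `m` is no farther from `a` than `m`, so it is `m`
  have hmeet : ∀ z ∈ w.bypass.support, z ∈ p.support → z = m := fun z hzw hzp => by
    have := hd.dist_add_dist_of_mem_support hw hzw
    have := hmin z hzp
    exact dist_le_zero.mp (by linarith)
  have through : ∀ {t : V} (s : G.Walk m t), s.IsPath → (∀ z ∈ s.support, z ∈ p.support) →
      dist a t = dist a m + dist m t := fun s hs hsp =>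
    (hd.dist_add_dist_of_mem_support
      (hw.append_of_forall_mem_support hs fun z hzw hzs => hmeet z hzw (hsp z hzs))
      ((mem_support_append_iff _ _).mpr (Or.inl w.bypass.end_mem_support))).symm
  refine ⟨m, hm, through _ (hp.takeUntil hm).reverse fun z hz => ?_,
    through _ (hp.dropUntil hm) fun z hz => p.support_dropUntil_subset_support hm hz⟩
  rw [support_reverse, List.mem_reverse] at hz
  exact p.support_takeUntil_subset_support hm hz

theorem dist_add_dist_le_max [MetricSpace V] (hd : IsPathLengthMetric G l) (hG : G.Connected)
    (a b x y : V) :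
    dist a b + dist x y ≤ max (dist a x + dist b y) (dist a y + dist b x) := by
  classical
  obtain ⟨p⟩ := hG.preconnected x y
  have hp := p.bypass_isPath
  obtain ⟨m, hm, hax, hay⟩ := hd.exists_gate hG hp a
  obtain ⟨n, hn, hbx, hby⟩ := hd.exists_gate hG hp b
  have hxy := hd.dist_add_dist_of_mem_support hp hn
  have hab : dist a b ≤ dist a m + dist m n + dist b n := by
    linarith [dist_triangle4 a m n b, dist_comm n b]
  rcases hd.dist_add_dist_eq_or_dist_add_dist_eq hp hm hn with h | h
  · refine le_max_of_le_left ?_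
    linarith [dist_comm m x, dist_comm n x, dist_comm n m]
  · refine le_max_of_le_right ?_
    linarith [dist_comm n x]

end IsPathLengthMetric

theorem stmt11_general (V : Type*) [MetricSpace V]
    (G : SimpleGraph V) (l : Sym2 V → ℝ) (hT : G.IsTree)
    (hd : ∀ (x y : V) (p : G.Walk x y), p.IsPath → dist x y = (p.edges.map l).sum)
    (x y : V) (r : ℝ) (hr : dist x y = r) :
    Metric.diam (Metric.closedBall x r ∩ Metric.closedBall y r) = r ∧
      ∀ a ∈ Metric.closedBall x r ∩ Metric.closedBall y r,
        ∀ b ∈ Metric.closedBall x r ∩ Metric.closedBall y r,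
          dist a b = r →
            (dist a x = r ∨ dist a y = r) ∧ (dist b x = r ∨ dist b y = r) := by
  have four_point : ∀ a b, dist a b + r ≤ max (dist a x + dist b y) (dist a y + dist b x) :=
    fun a b => hr ▸ IsPathLengthMetric.dist_add_dist_le_max hd hT.connected a b x y
  have hr0 : 0 ≤ r := hr ▸ dist_nonneg
  have hx : x ∈ Metric.closedBall x r ∩ Metric.closedBall y r :=
    ⟨Metric.mem_closedBall_self hr0, hr.le⟩
  have hy : y ∈ Metric.closedBall x r ∩ Metric.closedBall y r :=
    ⟨(dist_comm y x ▸ hr).le, Metric.mem_closedBall_self hr0⟩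
  refine ⟨le_antisymm ?_ ?_, ?_⟩
  · refine Metric.diam_le_of_forall_dist_le hr0 fun a ⟨hax, hay⟩ b ⟨hbx, hby⟩ => ?_
    have := four_point a b
    rw [Metric.mem_closedBall] at hax hay hbx hby
    linarith [max_le (add_le_add hax hby) (add_le_add hay hbx)]
  · exact hr.symm.trans_le <| Metric.dist_le_diam_of_mem
      (Metric.isBounded_closedBall.subset Set.inter_subset_left) hx hy
  · rintro a ⟨hax, hay⟩ b ⟨hbx, hby⟩ hab
    rw [Metric.mem_closedBall] at hax hay hbx hby
    rcases le_max_iff.mp (four_point a b) with h | h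
    · exact ⟨Or.inl (by linarith), Or.inr (by linarith)⟩
    · exact ⟨Or.inr (by linarith), Or.inl (by linarith)⟩

/-- In a finite tree metric space, for distinct `x, y` with `d(x,y) = r`, the
intersection `B(x,r) ∩ B(y,r)` has diameter exactly `r`, and any two of its points
at distance `r` each lie on the sphere `S(x,r)` or `S(y,r)`. -/
theorem stmt11 (V : Type*) [MetricSpace V] [Fintype V]
    (G : SimpleGraph V) (l : Sym2 V → ℝ) (hT : G.IsTree)
    (hl : ∀ e ∈ G.edgeSet, 0 < l e)
    (hd : ∀ (x y : V) (p : G.Walk x y), p.IsPath → dist x y = (p.edges.map l).sum)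
    (x y : V) (hxy : x ≠ y) (r : ℝ) (hr : dist x y = r) :
    Metric.diam (Metric.closedBall x r ∩ Metric.closedBall y r) = r ∧
      ∀ a ∈ Metric.closedBall x r ∩ Metric.closedBall y r,
        ∀ b ∈ Metric.closedBall x r ∩ Metric.closedBall y r,
          dist a b = r →
            (dist a x = r ∨ dist a y = r) ∧ (dist b x = r ∨ dist b y = r) :=
  stmt11_general V G l hT hd x y r hr
end
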